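/- arXiv:math/0408437 — 6 statements merged into one kernel-verified Lean document; each statement's English description precedes it below -/
import Mathlib

section
/- Let p₁,…,p_r ∈ S = ℂ[x₁,…,xₙ] be pairwise non-proportional nonzero linear forms with product p = p₁⋯p_r, and let m ≥ 1. Then D^(m)(p) = ⋂_{i=1}^r D^(m)(p_i), i.e. an order-m differential operator with polynomial coefficients preserves the ideal ⟨p⟩ if and only if it preserves each ideal ⟨p_i⟩. -/
open MvPolynomial

noncomputable section

/-- The polynomial ring `S = ℂ[x₁,…,xₙ]`. -/
abbrev S (n : ℕ) : Type := MvPolynomial (Fin n) ℂ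

/-- The finite set of exponent vectors `α ∈ ℕⁿ` with `|α| = m`. -/
def degIdx (n m : ℕ) : Finset (Fin n → ℕ) :=
  (Fintype.piFinset fun _ : Fin n => Finset.range (m + 1)).filter fun α => ∑ i, α i = m

/-- The differential operator `∂^α`, the composition of the partial derivatives
`∂/∂xᵢ` applied `αᵢ` times. -/
def pd {n : ℕ} (α : Fin n → ℕ) : Module.End ℂ (S n) :=
  (List.ofFn fun i : Fin n => ((pderiv (R := ℂ) i).toLinearMap) ^ (α i)).prod

/-- The action of an order-`m` differential operator with polynomial coefficients
`c = (c_α)_{|α| = m}` on a polynomial: `c(f) = Σ_{|α|=m} c_α ∂^α f`. -/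
def applyOp {n m : ℕ} (c : degIdx n m → S n) (f : S n) : S n :=
  ∑ α : degIdx n m, c α * pd (α : Fin n → ℕ) f

lemma applyOp_add {n m : ℕ} (a b : degIdx n m → S n) (f : S n) :
    applyOp (a + b) f = applyOp a f + applyOp b f := by
  simp [applyOp, add_mul, Finset.sum_add_distrib]

lemma applyOp_smul {n m : ℕ} (s : S n) (a : degIdx n m → S n) (f : S n) :
    applyOp (s • a) f = s * applyOp a f := by
  simp [applyOp, Finset.mul_sum, mul_assoc]

lemma applyOp_zero {n m : ℕ} (f : S n) : applyOp (0 : degIdx n m → S n) f = 0 := by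
  simp [applyOp]

/-- `D^(m)(p)`: the `S`-module of order-`m` differential operators with polynomial
coefficients preserving the principal ideal `⟨p⟩`. -/
def Dm {n : ℕ} (m : ℕ) (p : S n) : Submodule (S n) (degIdx n m → S n) where
  carrier := {c | ∀ f ∈ Ideal.span {p}, applyOp c f ∈ Ideal.span {p}}
  add_mem' := by
    intro a b ha hb f hf
    rw [applyOp_add]
    exact Ideal.add_mem _ (ha f hf) (hb f hf)
  zero_mem' := by
    intro f hf
    rw [applyOp_zero]
    exact Ideal.zero_mem _
  smul_mem' := by
    intro s c hc f hf
    rw [applyOp_smul]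
    exact Ideal.mul_mem_left _ _ (hc f hf)

/-- A nonzero linear form. -/
def IsLinearForm {n : ℕ} (q : S n) : Prop := q ≠ 0 ∧ q.IsHomogeneous 1

/-- The linear forms of an arrangement are pairwise non-proportional. -/
def PairwiseNonProportional {n r : ℕ} (p : Fin r → S n) : Prop :=
  ∀ i j : Fin r, i ≠ j → ∀ a : ℂ, p i ≠ a • p j

end

/-!
An operator `T` of order `≤ k` in Grothendieck's sense cannot create membership in a prime ideal
`P` out of a factor `q ∉ P`: if `T (q g) ∈ P` for all `g`, then `T g ∈ P` for all `g`, by induction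
on `k` using `q T g = T (q g) - [T, q] g`. Applied to `T = c ∘ pᵢ` and `q = ∏_{j ≠ i} pⱼ`, this shows
that `c` preserves `⟨pᵢ⟩` whenever it preserves `⟨p⟩`. Conversely, non-proportional linear forms
are pairwise non-associated primes, so a polynomial lying in every `⟨pᵢ⟩` lies in `⟨p⟩`.
-/
section DiffOp

variable {R A : Type*} [CommRing R] [CommRing A] [Algebra R A]

open LinearMap

/-- Order at most `k`, in the sense of Grothendieck. -/
def IsDiffOp : ℕ → Module.End R A → Prop
  | 0, T => ∀ u f : A, T (u * f) = u * T f
  | k + 1, T => ∀ u : A, IsDiffOp k (T * mulLeft R u - mulLeft R u * T)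

theorem IsDiffOp.commute_mulLeft {T : Module.End R A} (hT : IsDiffOp 0 T) (u : A) :
    Commute T (mulLeft R u) :=
  LinearMap.ext fun f => hT u f

theorem isDiffOp_one : IsDiffOp 0 (1 : Module.End R A) := fun _ _ => rfl

theorem isDiffOp_mulLeft (u : A) : IsDiffOp 0 (mulLeft R u) := fun v f => by
  simp [mul_left_comm]

theorem isDiffOp_zero : ∀ k, IsDiffOp k (0 : Module.End R A)
  | 0 => fun _ _ => by simp
  | k + 1 => fun _ => by simpa using isDiffOp_zero k

theorem IsDiffOp.add : ∀ {k : ℕ} {T U : Module.End R A},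
    IsDiffOp k T → IsDiffOp k U → IsDiffOp k (T + U)
  | 0, _, _, hT, hU => fun u f => by simp [hT u f, hU u f, mul_add]
  | _ + 1, T, U, hT, hU => fun u => by
    convert (hT u).add (hU u) using 1
    simp only [add_mul, mul_add]
    abel

theorem mul_mul_sub_mul_mul_eq {B : Type*} [Ring B] (T U M : B) :
    T * U * M - M * (T * U) = T * (U * M - M * U) + (T * M - M * T) * U := by
  noncomm_ring

theorem IsDiffOp.mul : ∀ {a b : ℕ} {T U : Module.End R A},
    IsDiffOp a T → IsDiffOp b U → IsDiffOp (a + b) (T * U)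
  | 0, 0, T, U, hT, hU => fun u f => by simp [hU u f, hT u (U f)]
  | a + 1, 0, T, U, hT, hU => fun u => by
    simpa [mul_mul_sub_mul_mul_eq, (hU.commute_mulLeft u).eq] using (hT u).mul hU
  | 0, b + 1, T, U, hT, hU => fun u => by
    simpa [mul_mul_sub_mul_mul_eq, (hT.commute_mulLeft u).eq] using hT.mul (hU u)
  | a + 1, b + 1, T, U, hT, hU => fun u => by
    rw [mul_mul_sub_mul_mul_eq]
    exact (hT.mul (hU u)).add (Nat.add_right_comm a 1 b ▸ (hT u).mul hU)

theorem isDiffOp_derivation (D : Derivation R A A) : IsDiffOp 1 (D : Module.End R A) := fun u => by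
  have : (D : Module.End R A) * mulLeft R u - mulLeft R u * D = mulLeft R (D u) := by
    ext f
    simp [Derivation.leibniz, mul_comm]
  rw [this]
  exact isDiffOp_mulLeft _

theorem IsDiffOp.pow {k : ℕ} {T : Module.End R A} (hT : IsDiffOp k T) :
    ∀ j, IsDiffOp (k * j) (T ^ j)
  | 0 => isDiffOp_one
  | j + 1 => by rw [pow_succ]; exact (hT.pow j).mul hT

theorem isDiffOp_prod_ofFn : ∀ {l : ℕ} {T : Fin l → Module.End R A} {d : Fin l → ℕ},
    (∀ i, IsDiffOp (d i) (T i)) → IsDiffOp (∑ i, d i) (List.ofFn T).prod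
  | 0, _, _, _ => isDiffOp_one
  | l + 1, T, d, h => by
    rw [List.ofFn_succ, List.prod_cons, Fin.sum_univ_succ]
    exact (h 0).mul (isDiffOp_prod_ofFn fun i => h i.succ)

theorem IsDiffOp.mem_of_forall_mul_mem {P : Ideal A} [hP : P.IsPrime] {q : A} (hq : q ∉ P) :
    ∀ {k : ℕ} {T : Module.End R A}, IsDiffOp k T → (∀ g, T (q * g) ∈ P) → ∀ g, T g ∈ P
  | 0, T, hT, h, g => by
    have hq1 : q * T 1 ∈ P := hT q 1 ▸ h 1
    rw [← mul_one g, hT g 1]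
    exact P.mul_mem_left g ((hP.mem_or_mem hq1).resolve_left hq)
  | k + 1, T, hT, h, g => by
    have hcomm : ∀ g, (T * mulLeft R q - mulLeft R q * T) g = T (q * g) - q * T g := fun g => by
      simp
    have hcomm_mem : ∀ g, T (q * g) - q * T g ∈ P := fun g => by
      rw [← hcomm]
      refine (hT q).mem_of_forall_mul_mem hq (fun g => ?_) g
      rw [hcomm]
      exact P.sub_mem (h _) (P.mul_mem_left q (h g))
    have hqT : q * T g ∈ P := by simpa using P.sub_mem (h g) (hcomm_mem g)
    exact (hP.mem_or_mem hqT).resolve_left hq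

end DiffOp

open Function

namespace MvPolynomial

variable {σ R K : Type*} [CommRing R] [IsDomain R] [Field K]

theorem exists_eq_smul_of_dvd_of_totalDegree_le {p q : MvPolynomial σ R} (hq : q ≠ 0)
    (hdeg : q.totalDegree ≤ p.totalDegree) (h : p ∣ q) : ∃ a : R, q = a • p := by
  obtain ⟨u, rfl⟩ := h
  rw [totalDegree_mul_of_isDomain (left_ne_zero_of_mul hq) (right_ne_zero_of_mul hq)] at hdeg
  have hu : u = C (coeff 0 u) := totalDegree_eq_zero_iff_eq_C.1 (by omega)
  exact ⟨coeff 0 u, by rw [smul_eq_C_mul, mul_comm, ← hu]⟩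

theorem irreducible_of_totalDegree_eq_one_of_field {p : MvPolynomial σ K}
    (hp : p.totalDegree = 1) : Irreducible p := by
  have hp0 : p ≠ 0 := by rintro rfl; simp at hp
  obtain ⟨d, hd⟩ := exists_coeff_ne_zero hp0
  exact irreducible_of_totalDegree_eq_one hp fun x hx =>
    isUnit_iff_ne_zero.2 (ne_zero_of_dvd_ne_zero hd (hx d))

end MvPolynomial

theorem IsLinearForm.totalDegree_eq_one {n : ℕ} {q : S n} (hq : IsLinearForm q) :
    q.totalDegree = 1 :=
  hq.2.totalDegree hq.1

theorem IsLinearForm.irreducible {n : ℕ} {q : S n} (hq : IsLinearForm q) : Irreducible q :=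
  irreducible_of_totalDegree_eq_one_of_field hq.totalDegree_eq_one

theorem IsLinearForm.exists_eq_smul_of_dvd {n : ℕ} {p q : S n} (hp : IsLinearForm p)
    (hq : IsLinearForm q) (h : p ∣ q) : ∃ a : ℂ, q = a • p :=
  exists_eq_smul_of_dvd_of_totalDegree_le hq.1
    (hq.totalDegree_eq_one.trans hp.totalDegree_eq_one.symm).le h

section DiffOpOfOrder

variable {n m : ℕ}

noncomputable def applyOpₗ (c : degIdx n m → S n) : Module.End ℂ (S n) :=
  ∑ α : degIdx n m, LinearMap.mulLeft ℂ (c α) * pd (α : Fin n → ℕ)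

theorem applyOpₗ_apply (c : degIdx n m → S n) (f : S n) : applyOpₗ c f = applyOp c f := by
  simp [applyOpₗ, applyOp]

theorem isDiffOp_pd (α : Fin n → ℕ) : IsDiffOp (∑ i, α i) (pd α) :=
  isDiffOp_prod_ofFn fun i => by simpa using (isDiffOp_derivation (pderiv i)).pow (α i)

theorem isDiffOp_applyOpₗ (c : degIdx n m → S n) : IsDiffOp m (applyOpₗ c) :=
  Finset.sum_induction _ (IsDiffOp m) (fun _ _ => IsDiffOp.add) (isDiffOp_zero m) fun α _ => by
    have hα : ∑ i, (α : Fin n → ℕ) i = m := (Finset.mem_filter.mp α.2).2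
    simpa [hα] using (isDiffOp_mulLeft (c α)).mul (isDiffOp_pd (α : Fin n → ℕ))

theorem mem_Dm {p : S n} {c : degIdx n m → S n} :
    c ∈ Dm m p ↔ ∀ f, p ∣ f → p ∣ applyOp c f := by
  simp only [← Ideal.mem_span_singleton]
  rfl

theorem Dm_mul_le {ℓ q : S n} (hℓ : Prime ℓ) (hq : ¬ ℓ ∣ q) : Dm m (ℓ * q) ≤ Dm m ℓ := by
  intro c hc
  rw [mem_Dm] at hc ⊢
  rintro _ ⟨h, rfl⟩
  have := (Ideal.span_singleton_prime hℓ.ne_zero).2 hℓ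
  have hT : IsDiffOp m (applyOpₗ c * LinearMap.mulLeft ℂ ℓ) :=
    (isDiffOp_applyOpₗ c).mul (isDiffOp_mulLeft ℓ)
  have hTq : ∀ g, (applyOpₗ c * LinearMap.mulLeft ℂ ℓ) (q * g) ∈ Ideal.span {ℓ} := fun g => by
    simpa [applyOpₗ_apply, Ideal.mem_span_singleton, ← mul_assoc] using
      dvd_of_mul_right_dvd (hc _ (dvd_mul_right (ℓ * q) g))
  simpa [applyOpₗ_apply, Ideal.mem_span_singleton] using
    hT.mem_of_forall_mul_mem (by rwa [Ideal.mem_span_singleton]) hTq h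

theorem iInf_Dm_le_Dm_prod {ι : Type*} [Fintype ι] {p : ι → S n}
    (hp : Pairwise (IsRelPrime on p)) : ⨅ i, Dm m (p i) ≤ Dm m (∏ i, p i) := by
  intro c hc
  simp only [Submodule.mem_iInf, mem_Dm] at hc
  rw [mem_Dm]
  exact fun f hf => Fintype.prod_dvd_of_isRelPrime hp fun i =>
    hc i f ((Finset.dvd_prod_of_mem p (Finset.mem_univ i)).trans hf)

end DiffOpOfOrder

theorem Dm_prod_eq_iInf_general {n r m : ℕ} (p : Fin r → S n)
    (hlin : ∀ i, IsLinearForm (p i)) (hnp : PairwiseNonProportional p) :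
    Dm m (∏ i, p i) = ⨅ i : Fin r, Dm m (p i) := by
  have hrel : Pairwise (IsRelPrime on p) := fun i j hij =>
    (hlin i).irreducible.isRelPrime_iff_not_dvd.2 fun hdvd =>
      let ⟨a, ha⟩ := (hlin i).exists_eq_smul_of_dvd (hlin j) hdvd
      hnp j i hij.symm a ha
  refine le_antisymm (le_iInf fun i => ?_) (iInf_Dm_le_Dm_prod hrel)
  rw [← Finset.mul_prod_erase _ _ (Finset.mem_univ i)]
  exact Dm_mul_le (hlin i).irreducible.prime <| (hlin i).irreducible.isRelPrime_iff_not_dvd.1 <|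
    IsRelPrime.prod_right fun j hj => hrel (Finset.ne_of_mem_erase hj).symm

/-- For pairwise non-proportional nonzero linear forms `p₁,…,p_r`
with product `p = p₁⋯p_r` and `m ≥ 1`, `D^(m)(p) = ⋂ᵢ D^(m)(pᵢ)`. -/
theorem Dm_prod_eq_iInf {n r m : ℕ} (hm : 1 ≤ m) (p : Fin r → S n)
    (hlin : ∀ i, IsLinearForm (p i)) (hnp : PairwiseNonProportional p) :
    Dm m (∏ i, p i) = ⨅ i : Fin r, Dm m (p i) :=
  Dm_prod_eq_iInf_general p hlin hnp
end

section
/- Let 𝒜 be a central arrangement in ℂⁿ with defining polynomial p = p₁⋯p_r, let m ≥ 1, and let c be an order-m differential operator with polynomial coefficients. Then c ∈ D^(m)(𝒜) if and only if c(x^β · p) ∈ ⟨p⟩ for every β ∈ ℕⁿ with |β| < m. -/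
open MvPolynomial

/-! By the Leibniz rule, `c(g p) = Σ_γ d_γ ∂^γ g` with coefficients `d_γ` depending only on `c`
and `p`, and `d_γ = c_γ p` when `|γ| = m`. So `c` preserves `⟨p⟩` as soon as `d_γ ∈ ⟨p⟩` for all
`|γ| < m`. For `g = x^β` only the `γ ≤ β` survive, and `c(x^β p) = β! d_β + Σ_{γ < β} d_γ ∂^γ x^β`;
by well-founded induction on `β` the hypothesis on the `c(x^β p)` yields `d_β ∈ ⟨p⟩`. -/

namespace MvPolynomial

variable {σ R : Type*} [CommSemiring R]

theorem pderiv_pow_monomial (i : σ) (k : ℕ) (s : σ →₀ ℕ) (a : R) :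
    ((pderiv i).toLinearMap ^ k) (monomial s a) =
      monomial (s - Finsupp.single i k) (a * (s i).descFactorial k) := by
  induction k with
  | zero => simp
  | succ k ih =>
    rw [pow_succ', Module.End.mul_apply, ih, Derivation.coeFn_coe, pderiv_monomial,
      tsub_tsub, ← Finsupp.single_add, Nat.descFactorial_succ]
    congr 1
    simp only [Finsupp.tsub_apply, Finsupp.single_eq_same]
    push_cast
    ring

theorem list_prod_pderiv_pow_monomial (k : σ → ℕ) {l : List σ} (hl : l.Nodup)
    (s : σ →₀ ℕ) (a : R) :
    (l.map fun i => (pderiv i).toLinearMap ^ k i).prod (monomial s a) =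
      monomial (s - (l.map fun i => Finsupp.single i (k i)).sum)
        (a * ((l.map fun i => (s i).descFactorial (k i)).prod : ℕ)) := by
  induction l with
  | nil => simp
  | cons i l ih =>
    rw [List.nodup_cons] at hl
    have hi : (l.map fun j => Finsupp.single j (k j)).sum i = 0 := by
      rw [← Finsupp.applyAddHom_apply, map_list_sum, List.map_map]
      exact List.sum_eq_zero fun x hx => by
        obtain ⟨j, hj, rfl⟩ := List.mem_map.mp hx
        exact Finsupp.single_eq_of_ne (fun h => hl.1 (h ▸ hj))
    simp only [List.map_cons, List.prod_cons, List.sum_cons, Module.End.mul_apply]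
    rw [ih hl.2, pderiv_pow_monomial, Finsupp.tsub_apply, hi, tsub_zero, tsub_tsub, add_comm]
    push_cast
    ring_nf

theorem monomial_tsub_mul_monomial_tsub {s t u v : σ →₀ ℕ} {a b : R}
    (ha : a ≠ 0 → u ≤ s) (hb : b ≠ 0 → v ≤ t) :
    monomial (s - u) a * monomial (t - v) b = monomial (s + t - (u + v)) (a * b) := by
  by_cases ha0 : a = 0
  · simp [ha0]
  by_cases hb0 : b = 0
  · simp [hb0]
  rw [monomial_mul, tsub_add_tsub_comm (ha ha0) (hb hb0)]

end MvPolynomial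

theorem Nat.sum_Iic_choose_mul_descFactorial_mul_descFactorial (a b b' : ℕ) :
    ∑ j ∈ Finset.Iic a, a.choose j * (b.descFactorial j * b'.descFactorial (a - j)) =
      (b + b').descFactorial a := by
  rw [Nat.descFactorial_eq_factorial_mul_choose, Nat.add_choose_eq,
    Finset.Nat.sum_antidiagonal_eq_sum_range_succ_mk, Nat.range_succ_eq_Iic, Finset.mul_sum]
  refine Finset.sum_congr rfl fun j hj => ?_
  rw [Nat.descFactorial_eq_factorial_mul_choose b, Nat.descFactorial_eq_factorial_mul_choose b',
    ← Nat.choose_mul_factorial_mul_factorial (Finset.mem_Iic.mp hj)]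
  ring

open Finsupp

theorem Finsupp.equivFunOnFinite_symm_le_of_prod_descFactorial_ne_zero {σ : Type*} [Fintype σ]
    {s : σ →₀ ℕ} {γ : σ → ℕ} (h : ∏ i, (s i).descFactorial (γ i) ≠ 0) :
    equivFunOnFinite.symm γ ≤ s := fun i =>
  not_lt.mp fun hi =>
    h (Finset.prod_eq_zero (Finset.mem_univ i) (Nat.descFactorial_eq_zero_iff_lt.mpr hi))

section pd

variable {n : ℕ}

theorem pd_monomial (γ : Fin n → ℕ) (s : Fin n →₀ ℕ) (a : ℂ) :
    pd γ (monomial s a) =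
      monomial (s - equivFunOnFinite.symm γ) (a * ((∏ i, (s i).descFactorial (γ i) : ℕ) : ℂ)) := by
  rw [pd, List.ofFn_eq_map, list_prod_pderiv_pow_monomial γ (List.nodup_finRange n),
    ← List.ofFn_eq_map, ← List.ofFn_eq_map, List.sum_ofFn, List.prod_ofFn,
    equivFunOnFinite_symm_eq_sum]

theorem pd_zero : pd (0 : Fin n → ℕ) = 1 := by
  simp [pd]

theorem pd_monomial_mul_pd_monomial (γ δ : Fin n → ℕ) (s t : Fin n →₀ ℕ) (a b : ℂ) :
    pd γ (monomial s a) * pd δ (monomial t b) =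
      monomial (s + t - equivFunOnFinite.symm (γ + δ))
        (a * b * ((∏ i, (s i).descFactorial (γ i) * (t i).descFactorial (δ i) : ℕ) : ℂ)) := by
  have hle {u : Fin n →₀ ℕ} {ε : Fin n → ℕ} {x : ℂ}
      (h : x * ((∏ i, (u i).descFactorial (ε i) : ℕ) : ℂ) ≠ 0) : equivFunOnFinite.symm ε ≤ u :=
    equivFunOnFinite_symm_le_of_prod_descFactorial_ne_zero
      (by exact_mod_cast right_ne_zero_of_mul h)
  have hadd :
      equivFunOnFinite.symm γ + equivFunOnFinite.symm δ = equivFunOnFinite.symm (γ + δ) := by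
    ext i
    simp
  rw [pd_monomial, pd_monomial, monomial_tsub_mul_monomial_tsub hle hle, hadd]
  push_cast [Finset.prod_mul_distrib]
  ring_nf

theorem pd_mul (α : Fin n → ℕ) (f g : S n) :
    pd α (f * g) = ∑ γ ∈ Finset.Iic α, (∏ i, (α i).choose (γ i)) • (pd γ f * pd (α - γ) g) := by
  induction f using MvPolynomial.induction_on' generalizing g with
  | add f₁ f₂ h₁ h₂ => simp only [add_mul, map_add, h₁, h₂, smul_add, Finset.sum_add_distrib]
  | monomial s a =>
  induction g using MvPolynomial.induction_on' with
  | add g₁ g₂ h₁ h₂ => simp only [mul_add, map_add, h₁, h₂, smul_add, Finset.sum_add_distrib]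
  | monomial t b =>
  have term : ∀ γ ∈ Finset.Iic α,
      (∏ i, (α i).choose (γ i)) • (pd γ (monomial s a) * pd (α - γ) (monomial t b)) =
        monomial (s + t - equivFunOnFinite.symm α) (a * b *
          ((∏ i, (α i).choose (γ i) * ((s i).descFactorial (γ i) *
            (t i).descFactorial (α i - γ i)) : ℕ) : ℂ)) := by
    intro γ hγ
    rw [pd_monomial_mul_pd_monomial, add_tsub_cancel_of_le (Finset.mem_Iic.mp hγ), ← map_nsmul,
      nsmul_eq_mul]
    push_cast [Finset.prod_mul_distrib, Pi.sub_apply]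
    congr 1
    ring
  rw [Finset.sum_congr rfl term, ← map_sum, ← Finset.mul_sum, ← Nat.cast_sum, monomial_mul,
    pd_monomial]
  congr 3
  calc ∏ i, ((s + t) i).descFactorial (α i)
      = ∏ i, ∑ j ∈ Finset.Iic (α i),
          (α i).choose j * ((s i).descFactorial j * (t i).descFactorial (α i - j)) :=
        Finset.prod_congr rfl fun i _ =>
          (Nat.sum_Iic_choose_mul_descFactorial_mul_descFactorial _ _ _).symm
    _ = _ := Finset.prod_univ_sum _ _

theorem prod_X_pow_eq_monomial (β : Fin n → ℕ) :
    (∏ i, X i ^ β i : S n) = monomial (equivFunOnFinite.symm β) 1 := by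
  rw [monomial_eq, C_1, one_mul, Finsupp.prod_fintype _ _ (fun i => pow_zero _)]
  rfl

theorem pd_monomial_eq_zero_of_not_le {β γ : Fin n → ℕ} (h : ¬γ ≤ β) (a : ℂ) :
    pd γ (monomial (equivFunOnFinite.symm β) a) = 0 := by
  obtain ⟨i, hi⟩ : ∃ i, β i < γ i := by simpa [Pi.le_def] using h
  rw [pd_monomial, Finset.prod_eq_zero (Finset.mem_univ i)
    (Nat.descFactorial_eq_zero_iff_lt.mpr (by simpa using hi))]
  simp

theorem pd_monomial_self (β : Fin n → ℕ) (a : ℂ) :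
    pd β (monomial (equivFunOnFinite.symm β) a) = C (a * ∏ i, ((β i).factorial : ℂ)) := by
  simp [pd_monomial, Nat.descFactorial_self, monomial_zero']

end pd

theorem mem_degIdx {n m : ℕ} {α : Fin n → ℕ} : α ∈ degIdx n m ↔ ∑ i, α i = m := by
  simp only [degIdx, Finset.mem_filter, Fintype.mem_piFinset, Finset.mem_range,
    and_iff_right_iff_imp]
  intro h i
  have := Finset.single_le_sum (fun j _ => Nat.zero_le (α j)) (Finset.mem_univ i)
  omega

section applyOp

variable {n m : ℕ} (c : degIdx n m → S n) (P : S n)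

/-- The coefficient of `∂^γ g` in the Leibniz expansion of `c(g P)`. -/
noncomputable def mulCoeff (γ : Fin n → ℕ) : S n :=
  ∑ α : degIdx n m,
    if ∀ i, γ i ≤ α.1 i then (∏ i, (α.1 i).choose (γ i)) • (c α * pd (α.1 - γ) P) else 0

theorem applyOp_mul_eq_sum (g : S n) :
    applyOp c (g * P) = ∑ γ ∈ Finset.Iic (fun _ => m), mulCoeff c P γ * pd γ g := by
  simp only [mulCoeff, Finset.sum_mul]
  rw [Finset.sum_comm, applyOp]
  refine Finset.sum_congr rfl fun α _ => ?_
  have hα : α.1 ≤ fun _ => m := fun i =>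
    (Finset.single_le_sum (fun j _ => Nat.zero_le _) (Finset.mem_univ i)).trans_eq
      (mem_degIdx.mp α.2)
  have hbox : (Finset.Iic fun _ => m).filter (fun γ => ∀ i, γ i ≤ α.1 i) = Finset.Iic α.1 := by
    ext γ
    simpa [← Pi.le_def] using fun h => h.trans hα
  simp only [ite_mul, zero_mul]
  rw [← Finset.sum_filter, hbox, pd_mul, Finset.mul_sum]
  refine Finset.sum_congr rfl fun γ _ => ?_
  simp only [nsmul_eq_mul]
  ring

theorem mulCoeff_mem_span_of_le_sum {γ : Fin n → ℕ} (h : m ≤ ∑ i, γ i) :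
    mulCoeff c P γ ∈ Ideal.span {P} := by
  refine Submodule.sum_mem _ fun α _ => ?_
  split_ifs with hγα
  · obtain rfl : γ = α.1 := funext fun i =>
      (Finset.sum_eq_sum_iff_of_le fun i _ => hγα i).mp
        ((Finset.sum_le_sum fun i _ => hγα i).antisymm ((mem_degIdx.mp α.2).trans_le h))
        i (Finset.mem_univ i)
    simpa [pd_zero] using Ideal.mul_mem_left _ (c α) (Ideal.mem_span_singleton_self P)
  · exact Submodule.zero_mem _

theorem mulCoeff_mem_span
    (H : ∀ β : Fin n → ℕ, ∑ i, β i < m →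
      applyOp c ((∏ i, X i ^ β i) * P) ∈ Ideal.span {P}) (γ : Fin n → ℕ) :
    mulCoeff c P γ ∈ Ideal.span {P} := by
  induction γ using WellFoundedLT.induction with
  | _ γ ih =>
  rcases le_or_gt m (∑ i, γ i) with hge | hlt
  · exact mulCoeff_mem_span_of_le_sum c P hge
  have hγ : Finset.Iic γ ⊆ Finset.Iic fun _ => m := Finset.Iic_subset_Iic.mpr fun i =>
    (Finset.single_le_sum (fun j _ => Nat.zero_le _) (Finset.mem_univ i)).trans hlt.le
  have hexp := H γ hlt
  rw [applyOp_mul_eq_sum, prod_X_pow_eq_monomial, ← Finset.sum_subset hγ fun δ _ hδ => by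
      rw [pd_monomial_eq_zero_of_not_le (by simpa using hδ), mul_zero],
    Finset.Iic_eq_cons_Iio, Finset.sum_cons, pd_monomial_self] at hexp
  have hlower : ∑ δ ∈ Finset.Iio γ, mulCoeff c P δ * pd δ (monomial (equivFunOnFinite.symm γ) 1)
      ∈ Ideal.span {P} :=
    Submodule.sum_mem _ fun δ hδ => Ideal.mul_mem_right _ _ (ih δ (Finset.mem_Iio.mp hδ))
  have hunit : IsUnit (C (1 * ∏ i, ((γ i).factorial : ℂ)) : S n) :=
    (isUnit_iff_ne_zero.mpr (by simp [Finset.prod_eq_zero_iff, Nat.factorial_ne_zero])).map C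
  exact (Ideal.mul_unit_mem_iff_mem _ hunit).mp ((Submodule.add_mem_iff_left _ hlower).mp hexp)

end applyOp

theorem mem_Dm_iff_monomial_multiples_general {n r m : ℕ} (p : Fin r → S n)
    (c : degIdx n m → S n) :
    c ∈ Dm m (∏ i, p i) ↔
      ∀ β : Fin n → ℕ, (∑ i, β i) < m →
        applyOp c ((∏ i, X i ^ β i) * ∏ j, p j) ∈ Ideal.span {∏ j, p j} := by
  refine ⟨fun hc β _ => hc _ (Ideal.mul_mem_left _ _ (Ideal.mem_span_singleton_self _)),
    fun H f hf => ?_⟩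
  obtain ⟨g, rfl⟩ := Ideal.mem_span_singleton'.mp hf
  rw [applyOp_mul_eq_sum]
  exact Submodule.sum_mem _ fun γ _ => Ideal.mul_mem_right _ _ (mulCoeff_mem_span c _ H γ)

/-- For a central arrangement with defining polynomial `p = p₁⋯p_r`
and `m ≥ 1`, an order-`m` operator `c` lies in `D^(m)(𝒜)` iff `c(x^β · p) ∈ ⟨p⟩`
for every `β ∈ ℕⁿ` with `|β| < m`. -/
theorem mem_Dm_iff_monomial_multiples {n r m : ℕ} (hm : 1 ≤ m) (p : Fin r → S n)
    (hlin : ∀ i, IsLinearForm (p i)) (hnp : PairwiseNonProportional p)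
    (c : degIdx n m → S n) :
    c ∈ Dm m (∏ i, p i) ↔
      ∀ β : Fin n → ℕ, (∑ i, β i) < m →
        applyOp c ((∏ i, X i ^ β i) * ∏ j, p j) ∈ Ideal.span {∏ j, p j} :=
  mem_Dm_iff_monomial_multiples_general p c
end

section
/- Let q ∈ S = ℂ[x₁,…,xₙ] be a nonzero linear form and let H = {b ∈ ℂⁿ : q(b) = 0}. Identify order-1 operators (derivations) with vectors (c₁,…,cₙ) ∈ Sⁿ acting by θ(f) = Σᵢ cᵢ ∂f/∂xᵢ. Then: (a) the S-module N = {θ : θ(q) = 0} of derivations annihilating q equals the S-submodule of Sⁿ generated by the constant vectors b ∈ H; (b) if δ is any derivation with δ(q) = a·q for some nonzero a ∈ ℂ, then D^(1)(q) = N + S·δ. -/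
open MvPolynomial

noncomputable section

/-- The action of a derivation `c = (c₁,…,cₙ) ∈ Sⁿ` on a polynomial:
`c(f) = Σᵢ cᵢ ∂f/∂xᵢ`. -/
def applyDer {n : ℕ} (c : Fin n → S n) (f : S n) : S n :=
  ∑ i, c i * pderiv i f

/-- `D^(1)(p)`: the `S`-submodule of `Sⁿ` of derivations preserving `⟨p⟩`. -/
def D1 {n : ℕ} (p : S n) : Submodule (S n) (Fin n → S n) where
  carrier := {c | ∀ f ∈ Ideal.span {p}, applyDer c f ∈ Ideal.span {p}}
  add_mem' := by
    intro a b ha hb f hf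
    have : applyDer (a + b) f = applyDer a f + applyDer b f := by
      simp [applyDer, add_mul, Finset.sum_add_distrib]
    rw [this]; exact Ideal.add_mem _ (ha f hf) (hb f hf)
  zero_mem' := by
    intro f hf
    have : applyDer (0 : Fin n → S n) f = 0 := by simp [applyDer]
    rw [this]; exact Ideal.zero_mem _
  smul_mem' := by
    intro s c hc f hf
    have : applyDer (s • c) f = s * applyDer c f := by
      simp [applyDer, Finset.mul_sum, mul_assoc]
    rw [this]; exact Ideal.mul_mem_left _ _ (hc f hf)

/-- The `S`-module of derivations annihilating a fixed polynomial `q`. -/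
def AnnMod {n : ℕ} (q : S n) : Submodule (S n) (Fin n → S n) where
  carrier := {c | applyDer c q = 0}
  add_mem' := by
    intro a b ha hb
    have : applyDer (a + b) q = applyDer a q + applyDer b q := by
      simp [applyDer, add_mul, Finset.sum_add_distrib]
    simp_all
  zero_mem' := by simp [applyDer]
  smul_mem' := by
    intro s c hc
    have : applyDer (s • c) q = s * applyDer c q := by
      simp [applyDer, Finset.mul_sum, mul_assoc]
    simp_all

/-- The constant vector of `Sⁿ` associated to `b ∈ ℂⁿ`. -/
def constVec {n : ℕ} (b : Fin n → ℂ) : Fin n → S n := fun i => C (b i)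

/-!
A linear form `q` has constant partial derivatives `w = ∇q`, so `θ(q) = Σ θᵢ wᵢ` and `q(b) = b ⬝ᵥ w`.
If `w_k ≠ 0`, every `θ` with `Σ θᵢ wᵢ = 0` equals `Σ θᵢ (eᵢ - (wᵢ / w_k) e_k)`, an `S`-combination
of constant vectors of `H`. For (b), the Leibniz rule shows `θ ∈ D^(1)(q)` iff `θ(q) = g q` for some
`g`, and then `θ - (g / a) δ` annihilates `q`.
-/

namespace MvPolynomial.IsHomogeneous

variable {R σ : Type*} [CommSemiring R] {φ : MvPolynomial σ R}

theorem pderiv_eq_C (h : φ.IsHomogeneous 1) (i : σ) :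
    pderiv i φ = C (coeff 0 (pderiv i φ)) :=
  totalDegree_eq_zero_iff_eq_C.mp ((totalDegree_zero_iff_isHomogeneous _).mpr h.pderiv)

variable [Fintype σ]

theorem eq_sum_X_mul_C (h : φ.IsHomogeneous 1) :
    φ = ∑ i, X i * C (coeff 0 (pderiv i φ)) := by
  conv_lhs => rw [← one_smul ℕ φ, ← h.sum_X_mul_pderiv]
  simp_rw [← h.pderiv_eq_C]

theorem eval_eq_dotProduct (h : φ.IsHomogeneous 1) (b : σ → R) :
    eval b φ = b ⬝ᵥ fun i => coeff 0 (pderiv i φ) := by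
  conv_lhs => rw [h.eq_sum_X_mul_C]
  simp [dotProduct]

theorem coeff_pderiv_ne_zero (h : φ.IsHomogeneous 1) (hφ : φ ≠ 0) :
    (fun i => coeff 0 (pderiv i φ)) ≠ 0 := by
  intro hzero
  apply hφ
  rw [h.eq_sum_X_mul_C]
  simp [congrFun hzero]

end MvPolynomial.IsHomogeneous

theorem dotProduct_map_eq_zero_iff_mem_span {K A ι : Type*} [Field K] [CommRing A] [Fintype ι]
    (f : K →+* A) {w : ι → K} (hw : w ≠ 0) (c : ι → A) :
    c ⬝ᵥ (f ∘ w) = 0 ↔ c ∈ Submodule.span A ((f ∘ ·) '' {v | v ⬝ᵥ w = 0}) := by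
  classical
  constructor
  · intro hc
    obtain ⟨k, hk⟩ := Function.ne_iff.mp hw
    let v : ι → ι → K := fun i => Pi.single i 1 - (w i / w k) • Pi.single k 1
    have hv : ∀ i, v i ⬝ᵥ w = 0 := fun i => by
      simp [v, sub_dotProduct, div_mul_cancel₀ _ hk]
    have hmap : ∀ i, f ∘ v i = Pi.single i 1 - f (w i / w k) • Pi.single k 1 := fun i => by
      funext j
      simp [v, Pi.single_apply, apply_ite f]
    have hzero : ∑ i, c i * f (w i / w k) = 0 := by
      simp only [div_eq_mul_inv, map_mul, ← mul_assoc, ← Finset.sum_mul]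
      exact mul_eq_zero_of_left hc _
    have hsum : c = ∑ i, c i • (f ∘ v i) := by
      simp only [hmap, smul_sub, Finset.sum_sub_distrib, smul_smul, ← Finset.sum_smul, hzero,
        zero_smul, sub_zero]
      exact pi_eq_sum_univ' c
    rw [hsum]
    exact Submodule.sum_mem _ fun i _ =>
      Submodule.smul_mem _ _ (Submodule.subset_span ⟨v i, hv i, rfl⟩)
  · intro hc
    induction hc using Submodule.span_induction with
    | mem _ hx =>
      obtain ⟨v, hv, rfl⟩ := hx
      rw [← f.map_dotProduct, hv.out, map_zero]
    | zero => exact zero_dotProduct _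
    | add x y _ _ hx hy => rw [add_dotProduct, hx, hy, add_zero]
    | smul a x _ hx => rw [smul_dotProduct, hx, smul_zero]

theorem applyDer_eq_dotProduct {n : ℕ} (c : Fin n → S n) (f : S n) :
    applyDer c f = c ⬝ᵥ fun i => pderiv i f :=
  rfl

theorem applyDer_mul {n : ℕ} (c : Fin n → S n) (f g : S n) :
    applyDer c (f * g) = f * applyDer c g + g * applyDer c f := by
  simp only [applyDer, Finset.mul_sum, ← Finset.sum_add_distrib, pderiv_mul]
  exact Finset.sum_congr rfl fun i _ => by ring

theorem mem_D1_iff {n : ℕ} (p : S n) (c : Fin n → S n) :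
    c ∈ D1 p ↔ applyDer c p ∈ Ideal.span {p} := by
  refine ⟨fun hc => hc p (Ideal.mem_span_singleton_self p), fun hc f hf => ?_⟩
  obtain ⟨g, rfl⟩ := Ideal.mem_span_singleton'.mp hf
  rw [applyDer_mul]
  exact Ideal.add_mem _ (Ideal.mul_mem_left _ g hc)
    (Ideal.mul_mem_right _ _ (Ideal.mem_span_singleton_self p))

theorem D1_eq_annMod_sup_span {n : ℕ} (p : S n) (δ : Fin n → S n) {u : S n} (hu : IsUnit u)
    (hδ : applyDer δ p = u * p) : D1 p = AnnMod p ⊔ Submodule.span (S n) {δ} := by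
  obtain ⟨u, rfl⟩ := hu
  apply le_antisymm
  · intro c hc
    obtain ⟨g, hg⟩ := Ideal.mem_span_singleton'.mp ((mem_D1_iff p c).mp hc)
    have hann : c - (g * ↑u⁻¹) • δ ∈ AnnMod p := by
      show applyDer (c - (g * ↑u⁻¹) • δ) p = 0
      rw [applyDer_eq_dotProduct, sub_dotProduct, smul_dotProduct, ← applyDer_eq_dotProduct,
        ← applyDer_eq_dotProduct, hδ, ← hg, smul_eq_mul, mul_assoc, u.inv_mul_cancel_left,
        sub_self]
    exact Submodule.mem_sup.mpr ⟨_, hann, (g * ↑u⁻¹) • δ,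
      Submodule.smul_mem _ _ (Submodule.mem_span_singleton_self δ), sub_add_cancel c _⟩
  · refine sup_le (fun c hc => (mem_D1_iff p c).mpr ?_)
      ((Submodule.span_singleton_le_iff_mem _ _).mpr ?_)
    · rw [show applyDer c p = 0 from hc]
      exact Ideal.zero_mem _
    · rw [mem_D1_iff, hδ]
      exact Ideal.mul_mem_left _ _ (Ideal.mem_span_singleton_self p)

/-- Let `q` be a nonzero linear form and `H = {b ∈ ℂⁿ : q(b) = 0}`.
(a) The module `N` of derivations annihilating `q` is the `S`-submodule of `Sⁿ`
generated by the constant vectors `b ∈ H`. (b) If `δ` is a derivation with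
`δ(q) = a·q`, `a ∈ ℂ*`, then `D^(1)(q) = N + S·δ`. -/
theorem annihilator_span_and_D1_decomp {n : ℕ} (q : S n)
    (hq : q ≠ 0) (hlin : q.IsHomogeneous 1) :
    AnnMod q = Submodule.span (S n)
      (constVec '' {b : Fin n → ℂ | eval b q = 0}) ∧
    ∀ (δ : Fin n → S n) (a : ℂ), a ≠ 0 → applyDer δ q = C a * q →
      D1 q = AnnMod q ⊔ Submodule.span (S n) {δ} := by
  refine ⟨?_, fun δ a ha hδ => D1_eq_annMod_sup_span q δ ((Ne.isUnit ha).map C) hδ⟩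
  set w := fun i => coeff 0 (pderiv i q)
  have hgrad : (fun i => pderiv i q) = C ∘ w := funext hlin.pderiv_eq_C
  have hH : {b : Fin n → ℂ | eval b q = 0} = {v | v ⬝ᵥ w = 0} := by
    simp_rw [hlin.eval_eq_dotProduct]
    rfl
  ext c
  change applyDer c q = 0 ↔ _
  rw [applyDer_eq_dotProduct, hgrad, hH]
  exact dotProduct_map_eq_zero_iff_mem_span C (hlin.coeff_pderiv_ne_zero hq) c

end
end

section
/- Let r ≤ n be natural numbers. Then in the formal power series ring ℤ[[a,b]] one has the identity (Σ_{m ≥ 0} Σ_{k=0}^{min(m,r)} C(r,k)·C(n−r+m−1, m−k)·a^m b^k) · (1−a)ⁿ = (1−a+ab)^r, where C denotes the binomial coefficient and, for m = 0 and r = n, the term C(n−r+m−1, m−k) = C(−1,0) is interpreted as 1 (equivalently, the subtraction n−r+m−1 is truncated at 0). (This is the statement that the bigraded Poincaré–Betti series of ⊕_m D^(m)(𝒜_{n,r}) for r ≤ n equals (1−a+ab)^r/(1−a)ⁿ, where a records the order m and b the polynomial degree of the C(r,k)·C(n−r+m−1,m−k) free basis elements of polynomial degree k.) -/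
/-!
The coefficient `C(n−r+m−1, m−k)` of `a^m b^k` is `multichoose (n−r+k) (m−k)`, truncated
subtraction included, i.e. the coefficient of `a^(m−k)` in `(1−a)^-(n−r+k)`. The case `r = 0`
gives `pbSeries d 0 = (1−a)^-d`, and in general
`pbSeries n r = Σ_k C(r,k) (ab)^k pbSeries (n−r+k) 0`. Multiplying by
`(1−a)^n = (1−a)^(n−r+k) (1−a)^(r−k)` leaves the binomial expansion
`Σ_k C(r,k) (ab)^k (1−a)^(r−k) = ((1−a) + ab)^r`.
-/

noncomputable section

/-- The formal power series `Σ_{m,k} C(r,k)·C(n−r+m−1, m−k)·a^m b^k` in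
`ℤ[[a,b]]`, where `a = X 0` records the order and `b = X 1` the polynomial degree;
the coefficient of `a^m b^k` is `C(r,k)·C(n−r+m−1, m−k)` for `k ≤ m` (the
constraint `k ≤ r` being automatic since `C(r,k) = 0` otherwise), with the
truncated-subtraction convention `C(n−r+m−1, m−k) = C(0,0) = 1` when
`n − r + m − 1 < 0`. -/
def pbSeries (n r : ℕ) : MvPowerSeries (Fin 2) ℤ :=
  fun e => if e 1 ≤ e 0 then
    ((r.choose (e 1)) * ((n - r + e 0 - 1).choose (e 0 - e 1)) : ℤ)
  else 0

open MvPowerSeries Finset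

theorem MvPowerSeries.coeff_mul_X {σ R : Type*} [CommSemiring R] [DecidableEq σ]
    (f : MvPowerSeries σ R) (s : σ) (e : σ →₀ ℕ) :
    coeff e (f * X s) = if 1 ≤ e s then coeff (e - Finsupp.single s 1) f else 0 := by
  simp only [X_def, coeff_mul_monomial, mul_one, Finsupp.single_le_iff]

theorem coeff_pbSeries (n r : ℕ) (e : Fin 2 →₀ ℕ) :
    coeff e (pbSeries n r) =
      if e 1 ≤ e 0 then (r.choose (e 1) * (n - r + e 1).multichoose (e 0 - e 1) : ℤ) else 0 := by
  change (if e 1 ≤ e 0 then _ else _) = _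
  split_ifs with h
  · rw [Nat.multichoose_eq, show n - r + e 1 + (e 0 - e 1) - 1 = n - r + e 0 - 1 by omega]
  · rfl

theorem coeff_pbSeries_zero_right (d : ℕ) (e : Fin 2 →₀ ℕ) :
    coeff e (pbSeries d 0) = if e 1 = 0 then (d.multichoose (e 0) : ℤ) else 0 := by
  rw [coeff_pbSeries]
  rcases Nat.eq_zero_or_pos (e 1) with h | h
  · simp [h]
  · simp [h.ne', Nat.choose_eq_zero_of_lt h]

theorem pbSeries_zero_zero : pbSeries 0 0 = 1 := by
  ext e
  have he : e = 0 ↔ e 0 = 0 ∧ e 1 = 0 := by simp [Finsupp.ext_iff, Fin.forall_fin_two]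
  simp only [coeff_pbSeries_zero_right, coeff_one, he]
  rcases e 0 with _ | m <;> by_cases e 1 = 0 <;> simp [*]

theorem pbSeries_succ_zero_mul_one_sub_X (d : ℕ) :
    pbSeries (d + 1) 0 * (1 - X 0) = pbSeries d 0 := by
  ext e
  rw [mul_sub, mul_one, map_sub, coeff_mul_X]
  simp only [coeff_pbSeries_zero_right, Finsupp.tsub_apply, Finsupp.single_eq_same,
    Finsupp.single_eq_of_ne (show (1 : Fin 2) ≠ 0 by decide)]
  rcases e 0 with _ | m <;> rcases e 1 with _ | k <;>
    simp [Nat.multichoose_succ_succ]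

theorem pbSeries_zero_right_mul_one_sub_X_pow (d : ℕ) : pbSeries d 0 * (1 - X 0) ^ d = 1 := by
  induction d with
  | zero => rw [pow_zero, mul_one, pbSeries_zero_zero]
  | succ d ih => rw [pow_succ', ← mul_assoc, pbSeries_succ_zero_mul_one_sub_X, ih]

theorem coeff_X_mul_X_pow_mul_pbSeries_zero_right (k d : ℕ) (e : Fin 2 →₀ ℕ) :
    coeff e ((X 0 * X 1) ^ k * pbSeries d 0) =
      if e 1 = k ∧ k ≤ e 0 then (d.multichoose (e 0 - k) : ℤ) else 0 := by
  have hle : Finsupp.single 0 k + Finsupp.single 1 k ≤ e ↔ k ≤ e 0 ∧ k ≤ e 1 := by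
    simp [Finsupp.le_def, Fin.forall_fin_two]
  simp only [mul_pow, X_pow_eq, monomial_mul_monomial, one_mul, coeff_monomial_mul, hle,
    coeff_pbSeries_zero_right]
  simp only [Finsupp.tsub_apply, Finsupp.add_apply]
  split_ifs <;> simp_all <;> omega

theorem pbSeries_eq_sum (n r : ℕ) :
    pbSeries n r =
      ∑ k ∈ range (r + 1), r.choose k • ((X 0 * X 1) ^ k * pbSeries (n - r + k) 0) := by
  ext e
  rw [coeff_pbSeries, map_sum, Finset.sum_eq_single (e 1)]
  · rw [map_nsmul, coeff_X_mul_X_pow_mul_pbSeries_zero_right]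
    simp only [true_and, nsmul_eq_mul]
    split_ifs <;> simp
  · intro k _ hk
    rw [map_nsmul, coeff_X_mul_X_pow_mul_pbSeries_zero_right, if_neg (fun h => hk h.1.symm),
      smul_zero]
  · intro h
    rw [Nat.choose_eq_zero_of_lt (by simpa using h), zero_smul, map_zero]

/-- For `r ≤ n`, in `ℤ[[a,b]]` one has
`(Σ_{m≥0} Σ_{k=0}^{min(m,r)} C(r,k)·C(n−r+m−1,m−k)·a^m b^k)·(1−a)ⁿ = (1−a+ab)^r`. -/
theorem pbSeries_identity (n r : ℕ) (hrn : r ≤ n) :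
    pbSeries n r * (1 - MvPowerSeries.X 0) ^ n =
      (1 - MvPowerSeries.X 0 + MvPowerSeries.X 0 * MvPowerSeries.X 1 :
        MvPowerSeries (Fin 2) ℤ) ^ r := by
  calc pbSeries n r * (1 - X 0) ^ n
      = ∑ k ∈ range (r + 1), r.choose k • ((X 0 * X 1) ^ k *
          (pbSeries (n - r + k) 0 * (1 - X 0) ^ (n - r + k)) * (1 - X 0) ^ (r - k)) := by
        rw [pbSeries_eq_sum, sum_mul]
        refine sum_congr rfl fun k hk => ?_
        have hn : n - r + k + (r - k) = n := by have := mem_range.1 hk; omega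
        simp only [smul_mul_assoc, mul_assoc, ← pow_add, hn]
    _ = ∑ k ∈ range (r + 1),
          (X 0 * X 1) ^ k * (1 - X 0) ^ (r - k) * (r.choose k : MvPowerSeries (Fin 2) ℤ) := by
        simp only [pbSeries_zero_right_mul_one_sub_X_pow, mul_one, nsmul_eq_mul, mul_comm]
    _ = (1 - X 0 + X 0 * X 1) ^ r := by rw [← add_pow, add_comm]

end
end

section
/- Let m ≥ 1, n ≥ 3 and r ≥ m+n be integers. Then for every integer j ≥ 1 the binomial identity (C(r, j+r−n+1) − C(r−m, j+r−n+1−m)) · C(r−n−m+j, j) = (C(r−1, j+r−n+1) − C(r−1−m, j+r−n+1−m)) · C(r−n−m+j, j) + (C(r−1, j+r−n) − C(r−1−m, j+r−n−m)) · (C(r−n−m+j−1, j) + C(r−n−m+j−1, j−1)) holds, and for j = 0 one has C(r, r−n+1) − C(r−m, r−n+1−m) = (C(r−1, r−n+1) − C(r−1−m, r−n+1−m)) + (C(r−1, r−n) − C(r−1−m, r−n−m)). (These identities are the coefficientwise form of the Hadamard-product identity F(r,n,m) = b·F(r−1,n,m) + (1+bt)·F(r−1,n−1,m) for F(r,n,m)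 = {t^{n−r−1}((1+bt)^m − (bt)^m)(1+bt)^{r−m}} ⊙ (1−t)^{m−r+n−1}, i.e. that the conjectured Poincaré–Betti series is compatible with deletion–restriction.) -/
/-- Pascal's rule in `ℤ` for positive arguments. -/
lemma pascal_int (N K : ℕ) (hN : 1 ≤ N) (hK : 1 ≤ K) :
    (N.choose K : ℤ) = ((N - 1).choose K : ℤ) + ((N - 1).choose (K - 1) : ℤ) := by
  obtain ⟨N', rfl⟩ : ∃ N', N = N' + 1 := ⟨N - 1, by omega⟩
  obtain ⟨K', rfl⟩ : ∃ K', K = K' + 1 := ⟨K - 1, by omega⟩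
  simp [Nat.choose_succ_succ]
  ring

/-- The coefficientwise form of the Hadamard-product identity
`F(r,n,m) = b·F(r−1,n,m) + (1+bt)·F(r−1,n−1,m)` for the conjectured
Poincaré–Betti series: for `m ≥ 1`, `n ≥ 3`, `r ≥ m+n` and every `j ≥ 1`,
`(C(r, j+r−n+1) − C(r−m, j+r−n+1−m))·C(r−n−m+j, j)
  = (C(r−1, j+r−n+1) − C(r−1−m, j+r−n+1−m))·C(r−n−m+j, j)
    + (C(r−1, j+r−n) − C(r−1−m, j+r−n−m))·(C(r−n−m+j−1, j) + C(r−n−m+j−1, j−1))`,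
and for `j = 0`,
`C(r, r−n+1) − C(r−m, r−n+1−m)
  = (C(r−1, r−n+1) − C(r−1−m, r−n+1−m)) + (C(r−1, r−n) − C(r−1−m, r−n−m))`. -/
theorem deletion_restriction_binomial_identity (m n r : ℕ)
    (hm : 1 ≤ m) (hn : 3 ≤ n) (hr : m + n ≤ r) :
    (∀ j : ℕ, 1 ≤ j →
      ((r.choose (j + r - n + 1) : ℤ) - ((r - m).choose (j + r - n + 1 - m) : ℤ)) *
          ((r - n - m + j).choose j : ℤ) =
        (((r - 1).choose (j + r - n + 1) : ℤ) -
            ((r - 1 - m).choose (j + r - n + 1 - m) : ℤ)) *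
          ((r - n - m + j).choose j : ℤ) +
        (((r - 1).choose (j + r - n) : ℤ) - ((r - 1 - m).choose (j + r - n - m) : ℤ)) *
          (((r - n - m + j - 1).choose j : ℤ) + ((r - n - m + j - 1).choose (j - 1) : ℤ))) ∧
    ((r.choose (r - n + 1) : ℤ) - ((r - m).choose (r - n + 1 - m) : ℤ) =
      (((r - 1).choose (r - n + 1) : ℤ) - ((r - 1 - m).choose (r - n + 1 - m) : ℤ)) +
      (((r - 1).choose (r - n) : ℤ) - ((r - 1 - m).choose (r - n - m) : ℤ))) := by
  constructor
  · intro j hj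
    rw [pascal_int r (j + r - n + 1) (by omega) (by omega),
        pascal_int (r - m) (j + r - n + 1 - m) (by omega) (by omega),
        pascal_int (r - n - m + j) j (by omega) hj]
    simp only [show j + r - n + 1 - 1 = j + r - n from by omega,
      show j + r - n + 1 - m - 1 = j + r - n - m from by omega,
      show r - m - 1 = r - 1 - m from by omega]
    ring
  · rw [pascal_int r (r - n + 1) (by omega) (by omega),
        pascal_int (r - m) (r - n + 1 - m) (by omega) (by omega)]
    simp only [show r - n + 1 - 1 = r - n from by omega,
      show r - n + 1 - m - 1 = r - n - m from by omega,
      show r - m - 1 = r - 1 - m from by omega]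
    ring
end

section
/- Let 𝒜 be any central arrangement in ℂ², given by r ≥ 1 pairwise non-proportional nonzero linear forms in S = ℂ[x₁,x₂], and let m ≥ 1. Then D^(m)(𝒜) is a free S-module of rank m+1. -/
open MvPolynomial

/-!
Restricting to the line `p_j = 0` gives a surjection `π_j : S → ℂ[t]` with a ring section and
kernel `(p_j)`, and for pairwise non-proportional forms `∏ p_j ∣ f` iff every `π_j f` vanishes.
Hence `D^(m)(p)` is the intersection over `j` of the kernels of the `π_j`-semilinear maps
`c ↦ (g ↦ π_j (c (p g)))`. Intersecting a free module of rank `N` with such a kernel keeps it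
free of rank `N`: in coordinates the condition says that `π_j` of the coordinate vector lies in a
saturated submodule of `ℂ[t]^N`, which over the PID `ℂ[t]` is spanned by part of a basis; lifting
that basis along the section and multiplying the remaining vectors by `p_j` gives a basis of the
intersection. Starting from the free module of all order-`m` operators, of rank `m + 1`, intersect
once per line.
-/

open Module

section SaturatedSubmodule

variable {R F ι : Type*} [CommRing R] [IsDomain R] [IsPrincipalIdealRing R]
  [AddCommGroup F] [Module R F] [Finite ι]

theorem Module.Basis.exists_basis_mem_iff_repr_eq_zero (b : Basis ι R F) (V : Submodule R F)
    (hV : ∀ (a : R) (w : F), a ≠ 0 → a • w ∈ V → w ∈ V) :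
    ∃ (e : Basis ι R F) (J : Set ι), ∀ w, w ∈ V ↔ ∀ i ∉ J, e.repr w i = 0 := by
  obtain ⟨n, snf⟩ := V.smithNormalForm b
  refine ⟨snf.bM, Set.range snf.f, fun w =>
    ⟨fun hw i hi => snf.repr_eq_zero_of_notMem_range ⟨w, hw⟩ hi, fun hw => ?_⟩⟩
  have hspan : Submodule.span R (snf.bM '' Set.range snf.f) ≤ V := by
    rw [Submodule.span_le]
    rintro _ ⟨_, ⟨k, rfl⟩, rfl⟩
    have hk : snf.a k ≠ 0 := by
      rintro h
      apply snf.bN.ne_zero k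
      ext
      rw [snf.snf k, h, zero_smul, Submodule.coe_zero]
    exact hV _ _ hk (snf.snf k ▸ (snf.bN k).2)
  refine hspan (snf.bM.mem_span_image.mpr fun i hi => ?_)
  by_contra h
  exact Finsupp.mem_support_iff.mp hi (hw i h)

end SaturatedSubmodule

section LiftBasis

variable {R R' ι : Type*} [CommRing R] [CommRing R'] [Fintype ι] [DecidableEq ι]

theorem Module.Basis.exists_lift_of_leftInverse {π : R →+* R'} {σ : R' →+* R}
    (hσ : Function.LeftInverse π σ) (e : Basis ι R' (ι → R')) :
    ∃ e' : Basis ι R (ι → R), ∀ u i, π (e'.repr u i) = e.repr (fun k => π (u k)) i := by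
  set v : ι → ι → R := fun i k => σ (e i k)
  have hdet : IsUnit ((Pi.basisFun R ι).det v) := by
    have h := ((Pi.basisFun R' ι).is_basis_iff_det).mp ⟨e.linearIndependent, e.span_eq⟩
    rw [Basis.det_apply] at h ⊢
    have hv : (Pi.basisFun R ι).toMatrix v = σ.mapMatrix ((Pi.basisFun R' ι).toMatrix e) := by
      ext k i
      simp [Basis.toMatrix_apply, v]
    rw [hv, ← RingHom.map_det]
    exact h.map σ
  obtain ⟨hli, hspan⟩ := ((Pi.basisFun R ι).is_basis_iff_det).mpr hdet
  set e' := Basis.mk hli hspan.ge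
  refine ⟨e', fun u i => ?_⟩
  have hπu : (fun k => π (u k)) = ∑ i, π (e'.repr u i) • e i := by
    conv_lhs => rw [← e'.sum_repr u]
    ext k
    simp [Finset.sum_apply, e', v, hσ _]
  rw [hπu, e.repr_sum_self]

end LiftBasis

section WeightedBasis

variable {R M ι : Type*} [CommRing R] [IsDomain R] [AddCommGroup M] [Module R M] [Fintype ι]

theorem Module.Basis.nonempty_basis_of_mem_iff_dvd_repr (b : Basis ι R M) (w : ι → R)
    (hw : ∀ i, w i ≠ 0) (K : Submodule R M) (hK : ∀ x, x ∈ K ↔ ∀ i, w i ∣ b.repr x i) :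
    Nonempty (Basis ι R K) := by
  have hli : LinearIndependent R fun i => w i • b i := by
    refine Fintype.linearIndependent_iff.mpr fun g hg i => ?_
    have := Fintype.linearIndependent_iff.mp b.linearIndependent (fun i => g i * w i)
      (by simpa [mul_smul] using hg) i
    exact (mul_eq_zero.mp this).resolve_right (hw i)
  have hspan : Submodule.span R (Set.range fun i => w i • b i) = K := by
    apply le_antisymm
    · rw [Submodule.span_le]
      rintro _ ⟨i, rfl⟩
      refine (hK _).mpr fun j => ?_
      classical
      rw [map_smul, b.repr_self, Finsupp.smul_apply, Finsupp.single_apply]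
      split_ifs with h
      · exact h ▸ dvd_mul_right _ _
      · simp
    · intro x hx
      choose c hc using (hK x).mp hx
      rw [← b.sum_repr x]
      refine Submodule.sum_mem _ fun i _ => ?_
      rw [hc i, mul_comm, mul_smul]
      exact Submodule.smul_mem _ _ (Submodule.subset_span ⟨i, rfl⟩)
  exact ⟨(Basis.span hli).map (LinearEquiv.ofEq _ _ hspan)⟩

end WeightedBasis

section KernelBasis

variable {R R' M M₂ ι : Type*} [CommRing R] [IsDomain R] [CommRing R'] [IsDomain R']
  [IsPrincipalIdealRing R'] [AddCommGroup M₂] [Module R' M₂] [NoZeroSMulDivisors R' M₂]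
  [Fintype ι] [DecidableEq ι]

theorem LinearMap.nonempty_basis_ker_pi {π : R →+* R'} {σ : R' →+* R} {ℓ : R}
    (hσ : Function.LeftInverse π σ) (hℓ : ℓ ≠ 0)
    (hker : RingHom.ker π = Ideal.span {ℓ}) (Ψ : (ι → R) →ₛₗ[π] M₂) :
    Nonempty (Basis ι R (LinearMap.ker Ψ)) := by
  set L := Fintype.linearCombination R' fun i => Ψ (Pi.single i 1)
  have hΨ : ∀ u, Ψ u = L fun i => π (u i) := by
    intro u
    conv_lhs => rw [← (Pi.basisFun R ι).sum_repr u]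
    simp [L, Fintype.linearCombination_apply, map_sum]
  obtain ⟨e, J, hJ⟩ := (Pi.basisFun R' ι).exists_basis_mem_iff_repr_eq_zero (LinearMap.ker L)
    fun a w ha h => by
      rw [LinearMap.mem_ker, map_smul] at h
      exact (smul_eq_zero.mp h).resolve_left ha
  obtain ⟨e', he'⟩ := e.exists_lift_of_leftInverse hσ
  classical
  -- `u ∈ ker Ψ` iff the `e'`-coordinates of `u` outside `J` lie in `ker π = (ℓ)`.
  refine e'.nonempty_basis_of_mem_iff_dvd_repr (fun i => if i ∈ J then 1 else ℓ)
    (fun i => by split_ifs <;> simp [hℓ]) _ fun u => ?_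
  rw [LinearMap.mem_ker, hΨ, ← LinearMap.mem_ker, hJ]
  refine forall_congr' fun i => ?_
  split_ifs with hi
  · simp [hi]
  · simp only [hi, not_false_eq_true, forall_const, ← he', ← RingHom.mem_ker, hker,
      Ideal.mem_span_singleton]

variable [AddCommGroup M] [Module R M]

theorem Submodule.nonempty_basis_inf_ker {π : R →+* R'} {σ : R' →+* R} {ℓ : R}
    (hσ : Function.LeftInverse π σ) (hℓ : ℓ ≠ 0)
    (hker : RingHom.ker π = Ideal.span {ℓ}) (N : Submodule R M) (bN : Basis ι R N)
    (Φ : M →ₛₗ[π] M₂) : Nonempty (Basis ι R ↥(N ⊓ LinearMap.ker Φ)) := by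
  set g : (ι → R) →ₗ[R] M := N.subtype ∘ₗ bN.equivFun.symm.toLinearMap
  have hg : Function.Injective g := N.injective_subtype.comp bN.equivFun.symm.injective
  have hrange : LinearMap.range g = N := by
    rw [LinearMap.range_comp, LinearEquiv.range, Submodule.map_top, Submodule.range_subtype]
  have hmap : (LinearMap.ker (Φ.comp g)).map g = N ⊓ LinearMap.ker Φ := by
    rw [LinearMap.ker_comp, Submodule.map_comap_eq, hrange]
  obtain ⟨b⟩ := LinearMap.nonempty_basis_ker_pi hσ hℓ hker (Φ.comp g)
  exact ⟨(b.map (Submodule.equivMapOfInjective g hg _)).map (LinearEquiv.ofEq _ _ hmap)⟩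

theorem Module.Basis.nonempty_basis_iInf_ker {κ : Type*} [Fintype κ] (b : Basis ι R M)
    {π : κ → R →+* R'} {σ : κ → R' →+* R}
    (hσ : ∀ j, Function.LeftInverse (π j) (σ j)) {ℓ : κ → R} (hℓ : ∀ j, ℓ j ≠ 0)
    (hker : ∀ j, RingHom.ker (π j) = Ideal.span {ℓ j}) (Φ : ∀ j, M →ₛₗ[π j] M₂) :
    Nonempty (Basis ι R ↥(⨅ j, LinearMap.ker (Φ j))) := by
  classical
  suffices ∀ s : Finset κ, Nonempty (Basis ι R ↥(⨅ j ∈ s, LinearMap.ker (Φ j))) by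
    obtain ⟨b'⟩ := this Finset.univ
    exact ⟨b'.map (LinearEquiv.ofEq _ _ (by simp))⟩
  intro s
  induction s using Finset.induction_on with
  | empty => exact ⟨(b.map Submodule.topEquiv.symm).map (LinearEquiv.ofEq _ _ (by simp))⟩
  | insert j s _ ih =>
    obtain ⟨bs⟩ := ih
    rw [Finset.iInf_insert, inf_comm]
    exact Submodule.nonempty_basis_inf_ker (hσ j) (hℓ j) (hker j) _ bs (Φ j)

end KernelBasis

noncomputable section LinearForms

variable {R : Type*} [CommRing R]

def linForm (a b : R) : MvPolynomial (Fin 2) R := C a * X 0 + C b * X 1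

/-- Restriction to the line `a x₀ + b x₁ = 0`, parametrized by `t ↦ (b t, -a t)`. -/
def lineRestriction (a b : R) : MvPolynomial (Fin 2) R →ₐ[R] Polynomial R :=
  aeval ![Polynomial.C b * Polynomial.X, -Polynomial.C a * Polynomial.X]

theorem exists_linForm_eq {q : MvPolynomial (Fin 2) R} (hq : q.IsHomogeneous 1) :
    ∃ a b, linForm a b = q := by
  have hq' := (mem_homogeneousSubmodule 1 q).mpr hq
  rw [homogeneousSubmodule_one_eq_span_X, Submodule.mem_span_range_iff_exists_fun] at hq'
  obtain ⟨c, hc⟩ := hq'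
  exact ⟨c 0, c 1, by rw [← hc, Fin.sum_univ_two, linForm, smul_eq_C_mul, smul_eq_C_mul]⟩

theorem smul_linForm (k a b : R) : k • linForm a b = linForm (k * a) (k * b) := by
  simp only [linForm, smul_eq_C_mul, map_mul]
  ring

theorem lineRestriction_linForm (a b c d : R) :
    lineRestriction a b (linForm c d) = Polynomial.C (c * b - d * a) * Polynomial.X := by
  simp only [lineRestriction, linForm, map_add, map_sub, map_mul, algHom_C,
    Polynomial.algebraMap_eq, aeval_X, Matrix.cons_val_zero, Matrix.cons_val_one,
    Matrix.cons_val_fin_one]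
  ring

theorem lineRestriction_aeval_linForm {a b c d : R} (h : c * b - d * a = 1) (f : Polynomial R) :
    lineRestriction a b (Polynomial.aeval (linForm c d) f) = f := by
  have hcomp : (lineRestriction a b).comp (Polynomial.aeval (linForm c d)) = AlgHom.id R _ := by
    ext
    simp [lineRestriction_linForm, h]
  exact AlgHom.congr_fun hcomp f

theorem exists_leftInverse_lineRestriction {a b : R} (h : IsCoprime a b) :
    ∃ σ : Polynomial R →+* MvPolynomial (Fin 2) R,
      Function.LeftInverse (lineRestriction a b) σ := by
  obtain ⟨u, v, huv⟩ := h
  have hdet : v * b - -u * a = 1 := by linear_combination huv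
  exact ⟨(Polynomial.aeval (linForm v (-u))).toRingHom, lineRestriction_aeval_linForm hdet⟩

theorem ker_lineRestriction {a b : R} (h : IsCoprime a b) :
    RingHom.ker (lineRestriction a b) = Ideal.span {linForm a b} := by
  obtain ⟨u, v, huv⟩ := h
  set I := Ideal.span {linForm a b}
  set ψ := (Polynomial.aeval (linForm v (-u))).comp (lineRestriction a b)
  have hC : C u * C a + C v * C b = (1 : MvPolynomial (Fin 2) R) := by
    rw [← map_mul, ← map_mul, ← map_add, huv, map_one]
  -- `ψ` is the identity modulo `I`: on the variables, `X i - ψ (X i)` is a multiple of the form.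
  have hψ : (Ideal.Quotient.mkₐ R I).comp ψ = Ideal.Quotient.mkₐ R I := by
    refine MvPolynomial.algHom_ext fun i => ?_
    simp only [AlgHom.comp_apply, Ideal.Quotient.mkₐ_eq_mk, Ideal.Quotient.eq, I,
      Ideal.mem_span_singleton, ψ, lineRestriction, aeval_X]
    fin_cases i
    · refine ⟨-C u, ?_⟩
      simp only [linForm, Fin.zero_eta, Matrix.cons_val_zero, map_neg, map_mul, Polynomial.aeval_C,
        Polynomial.aeval_X, algebraMap_eq]
      linear_combination (X 0 : MvPolynomial (Fin 2) R) * hC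
    · refine ⟨-C v, ?_⟩
      simp only [linForm, Fin.mk_one, Matrix.cons_val_one, Matrix.cons_val_fin_one, map_neg,
        map_mul, Polynomial.aeval_C, Polynomial.aeval_X, algebraMap_eq]
      linear_combination (X 1 : MvPolynomial (Fin 2) R) * hC
  refine le_antisymm (fun f hf => ?_) ((Ideal.span_singleton_le_iff_mem _).mpr ?_)
  · rw [← Ideal.Quotient.eq_zero_iff_mem, ← Ideal.Quotient.mkₐ_eq_mk R, ← hψ, AlgHom.comp_apply,
      AlgHom.comp_apply, RingHom.mem_ker.mp hf, map_zero, map_zero]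
  · rw [RingHom.mem_ker, lineRestriction_linForm, mul_comm b, sub_self, map_zero, zero_mul]

end LinearForms

section LinearFormsField

variable {K : Type*} [Field K]

theorem isCoprime_of_linForm_ne_zero {a b : K} (h : linForm a b ≠ 0) : IsCoprime a b := by
  by_cases ha : a = 0
  · subst ha
    have hb : b ≠ 0 := by
      rintro rfl
      simp [linForm] at h
    exact isCoprime_zero_left.mpr hb.isUnit
  · exact ⟨a⁻¹, 0, by simp [ha]⟩

theorem lineRestriction_linForm_ne_zero {a b c d : K} (hcd : linForm c d ≠ 0)
    (h : ∀ k : K, linForm a b ≠ k • linForm c d) : lineRestriction c d (linForm a b) ≠ 0 := by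
  rw [lineRestriction_linForm, Ne, mul_eq_zero, Polynomial.C_eq_zero, sub_eq_zero, not_or]
  refine ⟨fun hdet => ?_, Polynomial.X_ne_zero⟩
  by_cases hc : c = 0
  · subst hc
    have hd : d ≠ 0 := by
      rintro rfl
      simp [linForm] at hcd
    refine h (b / d) ?_
    rw [smul_linForm]
    congr 1 <;> field_simp
    simpa [hd] using hdet
  · refine h (a / c) ?_
    rw [smul_linForm]
    congr 1 <;> field_simp
    exact hdet.symm

end LinearFormsField

theorem prod_dvd_iff_forall_eq_zero {R R' ι : Type*} [CommRing R] [IsDomain R]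
    [DecompositionMonoid R] [CommRing R'] [IsDomain R'] [Fintype ι] {π : ι → R →+* R'}
    {ℓ : ι → R} (hℓ : ∀ i, ℓ i ≠ 0) (hker : ∀ i, RingHom.ker (π i) = Ideal.span {ℓ i})
    (hπℓ : Pairwise fun i j => π i (ℓ j) ≠ 0) (f : R) : ∏ i, ℓ i ∣ f ↔ ∀ i, π i f = 0 := by
  have hmem : ∀ i g, π i g = 0 ↔ ℓ i ∣ g := fun i g => by
    rw [← RingHom.mem_ker, hker, Ideal.mem_span_singleton]
  refine ⟨fun h i => (hmem i f).mpr ((Finset.dvd_prod_of_mem ℓ (Finset.mem_univ i)).trans h),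
    fun h => Fintype.prod_dvd_of_isRelPrime (fun i j hij => ?_) fun i => (hmem i f).mp (h i)⟩
  have hprime : Prime (ℓ i) :=
    (Ideal.span_singleton_prime (hℓ i)).mp (hker i ▸ RingHom.ker_isPrime (π i))
  exact hprime.irreducible.isRelPrime_iff_not_dvd.mpr fun hd => hπℓ hij ((hmem i _).mpr hd)

noncomputable section DifferentialOperators

variable {n m : ℕ} {R' : Type*} [CommRing R']

def applyOpMulRestrict (π : S n →+* R') (p : S n) : (degIdx n m → S n) →ₛₗ[π] (S n → R') where
  toFun c g := π (applyOp c (p * g))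
  map_add' a b := funext fun g => by simp [applyOp_add]
  map_smul' s c := funext fun g => by simp [applyOp_smul]

theorem Dm_eq_iInf_ker {κ : Type*} (π : κ → S n →+* R') (p : S n)
    (hp : ∀ f, p ∣ f ↔ ∀ j, π j f = 0) :
    Dm m p = ⨅ j, LinearMap.ker (applyOpMulRestrict (m := m) (π j) p) := by
  ext c
  simp only [Submodule.mem_iInf, LinearMap.mem_ker, funext_iff]
  show (∀ f ∈ Ideal.span {p}, applyOp c f ∈ Ideal.span {p}) ↔ _
  simp only [Ideal.mem_span_singleton]
  refine ⟨fun h j g => (hp _).mp (h (p * g) (dvd_mul_right p g)) j, ?_⟩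
  rintro h _ ⟨g, rfl⟩
  exact (hp _).mpr fun j => h j g

end DifferentialOperators

theorem card_degIdx_two (m : ℕ) : (degIdx 2 m).card = m + 1 := by
  have hmem : ∀ α, α ∈ degIdx 2 m ↔ α 0 + α 1 = m := fun α => by
    simp only [degIdx, Finset.mem_filter, Fintype.mem_piFinset, Finset.mem_range,
      Fin.forall_fin_two, Fin.sum_univ_two]
    omega
  rw [← Finset.card_range (m + 1)]
  refine Finset.card_nbij' (fun α => α 0) (fun k => ![k, m - k]) (fun α hα => ?_)
    (fun k hk => ?_) (fun α hα => ?_) (fun k _ => rfl)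
  · simp only [Finset.mem_coe, hmem, Finset.mem_range] at hα ⊢
    omega
  · simp only [Finset.mem_coe, hmem, Finset.mem_range] at hk ⊢
    simp only [Matrix.cons_val_zero, Matrix.cons_val_one, Matrix.cons_val_fin_one]
    omega
  · simp only [Finset.mem_coe, hmem] at hα
    ext i
    fin_cases i
    · rfl
    · simp only [Fin.mk_one, Matrix.cons_val_one, Matrix.cons_val_fin_one]
      omega

theorem Dm_two_variables_free_general {r m : ℕ}
    (p : Fin r → S 2) (hlin : ∀ i, IsLinearForm (p i))
    (hnp : PairwiseNonProportional p) :
    Module.Free (S 2) (Dm m (∏ j, p j)) ∧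
    Nonempty (Module.Basis (Fin (m + 1)) (S 2) (Dm m (∏ j, p j))) := by
  choose a b hab using fun j => exists_linForm_eq (hlin j).2
  have hcop : ∀ j, IsCoprime (a j) (b j) := fun j =>
    isCoprime_of_linForm_ne_zero ((hab j).symm ▸ (hlin j).1)
  choose σ hσ using fun j => exists_leftInverse_lineRestriction (hcop j)
  set π := fun j => (lineRestriction (a j) (b j)).toRingHom
  have hker : ∀ j, RingHom.ker (π j) = Ideal.span {p j} := fun j =>
    hab j ▸ ker_lineRestriction (hcop j)
  have hπp : Pairwise fun i j => π i (p j) ≠ 0 := fun i j hij => by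
    simp only [π, AlgHom.toRingHom_eq_coe, RingHom.coe_coe, ← hab]
    exact lineRestriction_linForm_ne_zero (hab i ▸ (hlin i).1) (hab j ▸ hab i ▸ hnp j i hij.symm)
  have hDm := Dm_eq_iInf_ker (m := m) π _
    (prod_dvd_iff_forall_eq_zero (fun j => (hlin j).1) hker hπp)
  obtain ⟨B⟩ := (Pi.basisFun (S 2) (degIdx 2 m)).nonempty_basis_iInf_ker hσ
    (fun j => (hlin j).1) hker fun j => applyOpMulRestrict (π j) (∏ j, p j)
  let B' := (B.map (LinearEquiv.ofEq _ _ hDm.symm)).reindex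
    ((degIdx 2 m).equivFinOfCardEq (card_degIdx_two m))
  exact ⟨.of_basis B', ⟨B'⟩⟩

/-- For any central arrangement in `ℂ²` with `r ≥ 1` forms and
any `m ≥ 1`, the module `D^(m)(𝒜)` is a free `S`-module of rank `m+1`. -/
theorem Dm_two_variables_free {r m : ℕ} (hr : 1 ≤ r) (hm : 1 ≤ m)
    (p : Fin r → S 2) (hlin : ∀ i, IsLinearForm (p i))
    (hnp : PairwiseNonProportional p) :
    Module.Free (S 2) (Dm m (∏ j, p j)) ∧
    Nonempty (Module.Basis (Fin (m + 1)) (S 2) (Dm m (∏ j, p j))) :=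
  Dm_two_variables_free_general p hlin hnp
end
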